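/- arXiv:2410.04565 — 3 statements merged into one kernel-verified Lean document; each statement's English description precedes it below -/
import Mathlib

section
/- Let α̃ ∈ D_n and let y ∈ D_n satisfy y_i ≤ 1 − α̃_{n+1−i} for every i with 1 ≤ i ≤ n. Then there exist n×n complex positive semidefinite Hermitian matrices T, R, A with T + R + A = I such that the nonincreasingly ordered eigenvalues of R equal y and the nonincreasingly ordered eigenvalues of A equal α̃. -/
open Matrix BigOperators
open scoped ComplexOrder

/-- `v` lists the eigenvalues of `M` (a Hermitian matrix) in nonincreasing order. -/
def IsEigDesc {n : ℕ} (M : Matrix (Fin n) (Fin n) ℂ) (v : Fin n → ℝ) : Prop :=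
  Antitone v ∧ ∃ hM : M.IsHermitian, ∃ σ : Equiv.Perm (Fin n), ∀ i, v i = hM.eigenvalues (σ i)

/-- Membership in `D_n`: nonincreasing with entries in `[0,1]`. -/
def MemD {n : ℕ} (x : Fin n → ℝ) : Prop :=
  Antitone x ∧ ∀ i, x i ∈ Set.Icc (0 : ℝ) 1

/-!
All three matrices can be taken diagonal: `R = diag y`, `A = diag (α̃ reversed)` and
`T = I - R - A`, which is positive semidefinite precisely because `y_i + α̃_{n+1-i} ≤ 1`.
The eigenvalues of a real diagonal matrix are its diagonal entries up to a permutation, as the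
roots of its characteristic polynomial show.
-/

theorem Fintype.exists_equiv_comp_eq_of_map_univ_eq {α β γ : Type*} [Fintype α] [Fintype β]
    [DecidableEq γ] {f : α → γ} {g : β → γ}
    (h : Finset.univ.val.map f = Finset.univ.val.map g) : ∃ e : α ≃ β, g ∘ e = f := by
  have hfiber (c : γ) : Fintype.card {a // f a = c} = Fintype.card {b // g b = c} := by
    simp only [Fintype.card_subtype, Finset.card_def, Finset.filter_val]
    simpa [Multiset.count_map, eq_comm] using congrArg (Multiset.count c) h
  exact ⟨Equiv.ofFiberEquiv fun c => Fintype.equivOfCardEq (hfiber c),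
    funext <| Equiv.ofFiberEquiv_map _⟩

namespace Matrix

theorem posSemidef_diagonal_ofReal {𝕜 ι : Type*} [RCLike 𝕜] [DecidableEq ι] {d : ι → ℝ}
    (hd : ∀ i, 0 ≤ d i) : (diagonal fun i => (d i : 𝕜)).PosSemidef :=
  posSemidef_diagonal_iff.mpr fun i => RCLike.ofReal_nonneg.mpr (hd i)

variable {𝕜 ι : Type*} [RCLike 𝕜] [Fintype ι] [DecidableEq ι]

theorem IsHermitian.map_eigenvalues_diagonal {d : ι → ℝ}
    (hA : (diagonal fun i => (d i : 𝕜)).IsHermitian) :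
    Finset.univ.val.map hA.eigenvalues = Finset.univ.val.map d := by
  apply Multiset.map_injective (RCLike.ofReal_injective (K := 𝕜))
  rw [Multiset.map_map, ← hA.roots_charpoly_eq_eigenvalues, charpoly_diagonal,
    Polynomial.roots_prod _ _ (by simp [Finset.prod_ne_zero_iff, Polynomial.X_sub_C_ne_zero])]
  simp

theorem IsHermitian.exists_perm_eigenvalues_diagonal {d : ι → ℝ}
    (hA : (diagonal fun i => (d i : 𝕜)).IsHermitian) :
    ∃ σ : Equiv.Perm ι, ∀ i, d i = hA.eigenvalues (σ i) := by
  obtain ⟨σ, hσ⟩ :=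
    Fintype.exists_equiv_comp_eq_of_map_univ_eq hA.map_eigenvalues_diagonal.symm
  exact ⟨σ, fun i => (congrFun hσ i).symm⟩

end Matrix

theorem isEigDesc_diagonal_comp_perm {n : ℕ} {d : Fin n → ℝ} (hd : Antitone d)
    (σ : Equiv.Perm (Fin n)) : IsEigDesc (diagonal fun i => (d (σ i) : ℂ)) d := by
  have hA : (diagonal fun i => (d (σ i) : ℂ)).IsHermitian :=
    isHermitian_diagonal_of_self_adjoint _ <| funext fun i => Complex.conj_ofReal _
  obtain ⟨τ, hτ⟩ := hA.exists_perm_eigenvalues_diagonal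
  exact ⟨hd, hA, σ.symm.trans τ, fun i => by simpa using hτ (σ.symm i)⟩

/-- for `α̃ ∈ D_n` and `y ∈ D_n` with `y_i ≤ 1 - α̃_{n+1-i}` for all `i`,
there exist PSD Hermitian `T, R, A` with `T + R + A = I` whose nonincreasingly ordered
eigenvalues of `R` equal `y` and of `A` equal `α̃`. -/
theorem stmt4 {n : ℕ} (αt y : Fin n → ℝ) (hα : MemD αt) (hy : MemD y)
    (hle : ∀ i : Fin n, y i ≤ 1 - αt i.rev) :
    ∃ T R A : Matrix (Fin n) (Fin n) ℂ,
      T.PosSemidef ∧ R.PosSemidef ∧ A.PosSemidef ∧ T + R + A = 1 ∧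
      IsEigDesc R y ∧ IsEigDesc A αt := by
  refine ⟨diagonal fun i => ((1 - y i - αt i.rev : ℝ) : ℂ), diagonal fun i => (y i : ℂ),
    diagonal fun i => (αt i.rev : ℂ), ?_, ?_, ?_, ?_,
    isEigDesc_diagonal_comp_perm hy.1 (Equiv.refl _),
    isEigDesc_diagonal_comp_perm hα.1 Fin.revPerm⟩
  · exact posSemidef_diagonal_ofReal (d := fun i => 1 - y i - αt i.rev)
      fun i => by linarith [hle i]
  · exact posSemidef_diagonal_ofReal fun i => (hy.2 i).1
  · exact posSemidef_diagonal_ofReal fun i => (hα.2 _).1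
  · rw [diagonal_add, diagonal_add, ← diagonal_one]
    congr 1
    funext i
    push_cast
    ring
end

section
/- Let T, R, A be n×n complex positive semidefinite Hermitian matrices satisfying T + R + A = I, with eigenvalues τ, ρ, α in nonincreasing order. Then for every r with 1 ≤ r ≤ n−1 and every choice of indices 1 ≤ i_1 < i_2 < … < i_r ≤ n, the Lidskii–Wielandt-type inequalities Σ_{k=1}^{r} τ_{n+1−i_k} ≥ r − Σ_{k=1}^{r} ρ_{i_k} − Σ_{j=1}^{r} α_j and Σ_{k=1}^{r} τ_{n+1−i_k} ≥ r − Σ_{j=1}^{r} ρ_j − Σ_{k=1}^{r} α_{i_k} both hold. -/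
/-! Since `T + R + A = 1`, the eigenvalues of `R + A = 1 - T` are `1 - τ_{n+1-i}`, so both
inequalities are instances of Lidskii's inequality
`∑_k λ_{i_k}(X + Y) ≤ ∑_k λ_{i_k}(X) + ∑_{j ≤ r} λ_j(Y)` (with `X, Y = R, A` and `A, R`).
To prove it, let `c = λ_r(Y)` and `Y₁ = (Y - c)₊`. Then `X + Y ≤ X + Y₁ + c` and `X ≤ X + Y₁`
in the Loewner order, so by Weyl monotonicity (Courant–Fischer, via a dimension count)
`λ_i(X + Y) ≤ λ_i(X + Y₁) + c`, and the nonnegative gaps `λ_i(X + Y₁) - λ_i(X)` sum to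
`tr Y₁ = ∑_{j ≤ r} (λ_j(Y) - c)`. -/

open Matrix BigOperators
open scoped ComplexOrder

/-- Value of a `Fin n`-indexed vector at a 1-based index `m ∈ {1,…,n}` (0 otherwise). -/
def oneBased {n : ℕ} {β : Type*} [Zero β] (v : Fin n → β) (m : ℕ) : β :=
  if h : m - 1 < n then v ⟨m - 1, h⟩ else 0

open Module
open scoped InnerProductSpace

variable {𝕜 E ι : Type*} [RCLike 𝕜] [NormedAddCommGroup E] [InnerProductSpace 𝕜 E]

namespace OrthonormalBasis

variable [Fintype ι] (b : OrthonormalBasis ι 𝕜 E)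

lemma inner_apply_eq_sum {T : E →ₗ[𝕜] E} {d : ι → ℝ}
    (hT : ∀ i, T (b i) = (d i : 𝕜) • b i) (x y : E) :
    ⟪T x, y⟫_𝕜 = ∑ i, (d i : 𝕜) * (starRingEnd 𝕜 ⟪b i, x⟫_𝕜 * ⟪b i, y⟫_𝕜) := by
  have hTx : T x = ∑ i, ((d i : 𝕜) * ⟪b i, x⟫_𝕜) • b i := by
    nth_rewrite 1 [← b.sum_repr x]
    simp only [map_sum, map_smul, hT, smul_smul, b.repr_apply_apply, mul_comm]
  simp only [hTx, sum_inner, inner_smul_left, map_mul, RCLike.conj_ofReal, mul_assoc]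

lemma re_inner_apply_self_eq_sum {T : E →ₗ[𝕜] E} {d : ι → ℝ}
    (hT : ∀ i, T (b i) = (d i : 𝕜) • b i) (v : E) :
    RCLike.re ⟪T v, v⟫_𝕜 = ∑ i, d i * ‖⟪b i, v⟫_𝕜‖ ^ 2 := by
  simp only [b.inner_apply_eq_sum hT, RCLike.conj_mul, map_sum]
  norm_cast

lemma isSymmetric_of_apply_eq_smul {T : E →ₗ[𝕜] E} {d : ι → ℝ}
    (hT : ∀ i, T (b i) = (d i : 𝕜) • b i) : T.IsSymmetric := by
  intro x y
  rw [← inner_conj_symm x, b.inner_apply_eq_sum hT, b.inner_apply_eq_sum hT, map_sum]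
  simp only [map_mul, RCLike.conj_ofReal, RCLike.conj_conj, mul_comm]

lemma isPositive_of_apply_eq_smul {T : E →ₗ[𝕜] E} {d : ι → ℝ}
    (hT : ∀ i, T (b i) = (d i : 𝕜) • b i) (hd : 0 ≤ d) : T.IsPositive :=
  ⟨b.isSymmetric_of_apply_eq_smul hT, fun v => by
    rw [b.re_inner_apply_self_eq_sum hT]
    exact Finset.sum_nonneg fun i _ => mul_nonneg (hd i) (by positivity)⟩

lemma trace_eq_sum_of_apply_eq_smul {T : E →ₗ[𝕜] E} {d : ι → ℝ}
    (hT : ∀ i, T (b i) = (d i : 𝕜) • b i) : T.trace 𝕜 E = ∑ i, (d i : 𝕜) := by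
  simp [T.trace_eq_sum_inner b, hT, inner_smul_right]

lemma inner_eq_zero_of_mem_span_image {s : Set ι} {v : E} (hv : v ∈ Submodule.span 𝕜 (b '' s))
    {i : ι} (hi : i ∉ s) : ⟪b i, v⟫_𝕜 = 0 := by
  rw [← b.repr_apply_apply, ← b.coe_toBasis_repr_apply, ← Finsupp.notMem_support_iff]
  exact fun h => hi (b.toBasis.mem_span_image.mp (by rwa [b.coe_toBasis]) h)

lemma finrank_span_image (s : Finset ι) :
    finrank 𝕜 (Submodule.span 𝕜 (b '' s)) = s.card := by
  rw [Set.image_eq_range]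
  exact (finrank_span_eq_card
    (b.orthonormal.linearIndependent.comp ((↑) : s → ι) Subtype.val_injective)).trans (by simp)

lemma mul_norm_sq_le_re_inner_of_mem_span {T : E →ₗ[𝕜] E} {d : ι → ℝ}
    (hT : ∀ i, T (b i) = (d i : 𝕜) • b i) {s : Set ι} {a : ℝ} (ha : ∀ i ∈ s, a ≤ d i) {v : E}
    (hv : v ∈ Submodule.span 𝕜 (b '' s)) : a * ‖v‖ ^ 2 ≤ RCLike.re ⟪T v, v⟫_𝕜 := by
  rw [b.re_inner_apply_self_eq_sum hT, ← b.sum_sq_norm_inner_right, Finset.mul_sum]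
  refine Finset.sum_le_sum fun i _ => ?_
  by_cases hi : i ∈ s
  · gcongr
    exact ha i hi
  · simp [b.inner_eq_zero_of_mem_span_image hv hi]

lemma re_inner_le_mul_norm_sq_of_mem_span {T : E →ₗ[𝕜] E} {d : ι → ℝ}
    (hT : ∀ i, T (b i) = (d i : 𝕜) • b i) {s : Set ι} {a : ℝ} (ha : ∀ i ∈ s, d i ≤ a) {v : E}
    (hv : v ∈ Submodule.span 𝕜 (b '' s)) : RCLike.re ⟪T v, v⟫_𝕜 ≤ a * ‖v‖ ^ 2 := by
  rw [b.re_inner_apply_self_eq_sum hT, ← b.sum_sq_norm_inner_right, Finset.mul_sum]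
  refine Finset.sum_le_sum fun i _ => ?_
  by_cases hi : i ∈ s
  · gcongr
    exact ha i hi
  · simp [b.inner_eq_zero_of_mem_span_image hv hi]

end OrthonormalBasis

theorem LinearMap.le_of_eigenbasis_of_re_inner_le {n : ℕ} {T S : E →ₗ[𝕜] E}
    {b c : OrthonormalBasis (Fin n) 𝕜 E} {d e : Fin n → ℝ} (hd : Antitone d) (he : Antitone e)
    (hb : ∀ i, T (b i) = (d i : 𝕜) • b i) (hc : ∀ i, S (c i) = (e i : 𝕜) • c i)
    (hTS : ∀ v, RCLike.re ⟪T v, v⟫_𝕜 ≤ RCLike.re ⟪S v, v⟫_𝕜) : d ≤ e := by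
  intro k
  -- the top `k + 1` eigenvectors of `T` and the bottom `n - k` of `S` span intersecting subspaces
  have : FiniteDimensional 𝕜 E := b.toBasis.finiteDimensional_of_finite
  have hfinrank : finrank 𝕜 E = n := by simpa using finrank_eq_card_basis b.toBasis
  set V := Submodule.span 𝕜 (b '' ↑(Finset.Iic k))
  set W := Submodule.span 𝕜 (c '' ↑(Finset.Ici k))
  have hVW : ¬ Disjoint V W := fun h => by
    have := Submodule.finrank_add_finrank_le_of_disjoint h
    rw [b.finrank_span_image, c.finrank_span_image, Fin.card_Iic, Fin.card_Ici, hfinrank] at this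
    omega
  obtain ⟨v, hvV, hvW, hv⟩ : ∃ v ∈ V, v ∈ W ∧ v ≠ 0 := by
    simpa [Submodule.disjoint_def] using hVW
  have hlow := b.mul_norm_sq_le_re_inner_of_mem_span hb (a := d k)
    (fun i hi => hd (Finset.mem_Iic.mp hi)) hvV
  have hup := c.re_inner_le_mul_norm_sq_of_mem_span hc (a := e k)
    (fun i hi => he (Finset.mem_Ici.mp hi)) hvW
  have hpos : 0 < ‖v‖ ^ 2 := by positivity
  exact le_of_mul_le_mul_right ((hlow.trans (hTS v)).trans hup) hpos

theorem Antitone.sum_max_sub_add_eq {n : ℕ} {μ : Fin n → ℝ} (hμ : Antitone μ) (k : Fin n) :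
    ∑ i, max (μ i - μ k) 0 + (k + 1) * μ k = ∑ i ∈ Finset.Iic k, μ i := by
  have hsub : ∑ i ∈ Finset.Iic k, max (μ i - μ k) 0 = ∑ i, max (μ i - μ k) 0 :=
    Finset.sum_subset (Finset.subset_univ _) fun i _ hi => max_eq_right <| sub_nonpos.mpr <|
      hμ (le_of_lt (not_le.mp (Finset.mem_Iic.not.mp hi)))
  rw [← hsub, Finset.sum_congr rfl fun i hi => max_eq_left <| sub_nonneg.mpr <|
      hμ (Finset.mem_Iic.mp hi), Finset.sum_sub_distrib, Finset.sum_const, Fin.card_Iic]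
  simp

namespace LinearMap.IsSymmetric

variable [FiniteDimensional 𝕜 E] {n : ℕ} (hn : finrank 𝕜 E = n) {T S X Y : E →ₗ[𝕜] E}

theorem eigenvalues_eq_of_apply_eq_smul (hT : T.IsSymmetric) (b : OrthonormalBasis (Fin n) 𝕜 E)
    {d : Fin n → ℝ} (hd : Antitone d) (hb : ∀ i, T (b i) = (d i : 𝕜) • b i) :
    hT.eigenvalues hn = d :=
  le_antisymm
    (le_of_eigenbasis_of_re_inner_le (hT.eigenvalues_antitone hn) hd
      (hT.apply_eigenvectorBasis hn) hb fun _ => le_rfl)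
    (le_of_eigenbasis_of_re_inner_le hd (hT.eigenvalues_antitone hn) hb
      (hT.apply_eigenvectorBasis hn) fun _ => le_rfl)

theorem eigenvalues_mono (hT : T.IsSymmetric) (hS : S.IsSymmetric) (hTS : T ≤ S) :
    hT.eigenvalues hn ≤ hS.eigenvalues hn :=
  le_of_eigenbasis_of_re_inner_le (hT.eigenvalues_antitone hn) (hS.eigenvalues_antitone hn)
    (hT.apply_eigenvectorBasis hn) (hS.apply_eigenvectorBasis hn) fun v => by
      simpa [inner_sub_left] using hTS.re_inner_nonneg_left v

theorem eigenvalues_add_smul_one (hT : T.IsSymmetric) (c : ℝ)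
    (hTc : (T + (c : 𝕜) • 1).IsSymmetric) :
    hTc.eigenvalues hn = fun i => hT.eigenvalues hn i + c :=
  hTc.eigenvalues_eq_of_apply_eq_smul hn (hT.eigenvectorBasis hn)
    (fun _ _ hij => add_le_add_left (hT.eigenvalues_antitone hn hij) c)
    fun i => by simp [add_smul]

theorem eigenvalues_of_add_eq_one (hS : S.IsSymmetric) (hT : T.IsSymmetric) (hST : S + T = 1)
    (i : Fin n) : hS.eigenvalues hn i = 1 - hT.eigenvalues hn i.rev := by
  obtain rfl : S = 1 - T := eq_sub_of_add_eq hST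
  rw [hS.eigenvalues_eq_of_apply_eq_smul hn ((hT.eigenvectorBasis hn).reindex Fin.revPerm)
    (d := fun i => 1 - hT.eigenvalues hn i.rev)]
  · exact fun i j hij => sub_le_sub_left (hT.eigenvalues_antitone hn (Fin.rev_le_rev.mpr hij)) 1
  · intro i
    simp [hT.apply_eigenvectorBasis, sub_smul]

theorem sum_eigenvalues_add_le (hX : X.IsSymmetric) (hY : Y.IsSymmetric) (s : Finset (Fin n))
    (k : Fin n) (hs : s.card = k + 1) :
    ∑ i ∈ s, (hX.add hY).eigenvalues hn i ≤
      ∑ i ∈ s, hX.eigenvalues hn i + ∑ j ∈ Finset.Iic k, hY.eigenvalues hn j := by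
  set μ := hY.eigenvalues hn
  set c := μ k
  set u := hY.eigenvectorBasis hn
  obtain ⟨Y₁, hY₁⟩ : ∃ Y₁ : E →ₗ[𝕜] E, ∀ i, Y₁ (u i) = ((max (μ i - c) 0 : ℝ) : 𝕜) • u i :=
    ⟨u.toBasis.constr 𝕜 fun i => ((max (μ i - c) 0 : ℝ) : 𝕜) • u i, fun i => by simp⟩
  have hY₁pos : Y₁.IsPositive := u.isPositive_of_apply_eq_smul hY₁ fun i => le_max_right _ _
  have hXY₁ : (X + Y₁).IsSymmetric := hX.add hY₁pos.isSymmetric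
  have hXY₁c : (X + Y₁ + (c : 𝕜) • 1).IsSymmetric :=
    hXY₁.add (u.isSymmetric_of_apply_eq_smul (d := fun _ => c) fun i => by simp)
  have hYle : Y ≤ Y₁ + (c : 𝕜) • 1 := by
    refine u.isPositive_of_apply_eq_smul (d := fun i => max (μ i - c) 0 + c - μ i)
      (fun i => ?_) fun i => ?_
    · simp [hY₁, u, μ, sub_smul, add_smul]
    · simp only [Pi.zero_apply]
      linarith [le_max_left (μ i - c) 0]
  have hupper : ∀ i, (hX.add hY).eigenvalues hn i ≤ hXY₁.eigenvalues hn i + c := by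
    intro i
    have := (hX.add hY).eigenvalues_mono hn hXY₁c
      (by simpa only [add_assoc] using add_le_add (le_refl X) hYle) i
    rwa [hXY₁.eigenvalues_add_smul_one hn c hXY₁c] at this
  have hgap : ∀ i, 0 ≤ hXY₁.eigenvalues hn i - hX.eigenvalues hn i := fun i =>
    sub_nonneg.mpr (hX.eigenvalues_mono hn hXY₁ (le_add_of_nonneg_right
      ((nonneg_iff_isPositive Y₁).mpr hY₁pos)) i)
  have htrace : ∑ i, (hXY₁.eigenvalues hn i - hX.eigenvalues hn i) = ∑ i, max (μ i - c) 0 := by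
    rw [Finset.sum_sub_distrib, ← hXY₁.re_trace_eq_sum_eigenvalues hn,
      ← hX.re_trace_eq_sum_eigenvalues hn, map_add, u.trace_eq_sum_of_apply_eq_smul hY₁]
    simp
  calc ∑ i ∈ s, (hX.add hY).eigenvalues hn i
      ≤ ∑ i ∈ s, (hXY₁.eigenvalues hn i + c) := Finset.sum_le_sum fun i _ => hupper i
    _ = ∑ i ∈ s, hX.eigenvalues hn i + ∑ i ∈ s, (hXY₁.eigenvalues hn i - hX.eigenvalues hn i)
          + (k + 1) * c := by
        simp only [Finset.sum_add_distrib, Finset.sum_sub_distrib, Finset.sum_const, hs]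
        simp
    _ ≤ ∑ i ∈ s, hX.eigenvalues hn i + ∑ i, max (μ i - c) 0 + (k + 1) * c := by
        gcongr
        exact htrace ▸ Finset.sum_le_sum_of_subset_of_nonneg (Finset.subset_univ s)
          fun i _ _ => hgap i
    _ = ∑ i ∈ s, hX.eigenvalues hn i + ∑ j ∈ Finset.Iic k, μ j := by
        rw [add_assoc, (hY.eigenvalues_antitone hn).sum_max_sub_add_eq k]

end LinearMap.IsSymmetric

section Matrix

variable {n : ℕ}

lemma IsEigDesc.isHermitian {M : Matrix (Fin n) (Fin n) ℂ} {v : Fin n → ℝ} (h : IsEigDesc M v) :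
    M.IsHermitian :=
  h.2.fst

lemma IsEigDesc.eq_eigenvalues {M : Matrix (Fin n) (Fin n) ℂ} {v : Fin n → ℝ} (h : IsEigDesc M v)
    (hM : (toEuclideanLin M).IsSymmetric) : v = hM.eigenvalues finrank_euclideanSpace_fin := by
  obtain ⟨hv, hH, σ, hσ⟩ := h
  refine (hM.eigenvalues_eq_of_apply_eq_smul _ (hH.eigenvectorBasis.reindex σ.symm) hv
    fun i => ?_).symm
  ext j
  simpa [hσ, toLpLin_apply] using congrFun (hH.mulVec_eigenvectorBasis (σ i)) j

theorem IsEigDesc.sum_one_sub_rev_le {X Y Z : Matrix (Fin n) (Fin n) ℂ} {ξ η ζ : Fin n → ℝ}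
    (hξ : IsEigDesc X ξ) (hη : IsEigDesc Y η) (hζ : IsEigDesc Z ζ) (h : X + Y + Z = 1)
    (s : Finset (Fin n)) (k : Fin n) (hs : s.card = k + 1) :
    ∑ i ∈ s, (1 - ζ i.rev) ≤ ∑ i ∈ s, ξ i + ∑ j ∈ Finset.Iic k, η j := by
  have hX : (toEuclideanLin X).IsSymmetric := isSymmetric_toEuclideanLin_iff.mpr hξ.isHermitian
  have hY : (toEuclideanLin Y).IsSymmetric := isSymmetric_toEuclideanLin_iff.mpr hη.isHermitian
  have hZ : (toEuclideanLin Z).IsSymmetric := isSymmetric_toEuclideanLin_iff.mpr hζ.isHermitian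
  have hn := finrank_euclideanSpace_fin (𝕜 := ℂ) (n := n)
  have hXYZ : toEuclideanLin X + toEuclideanLin Y + toEuclideanLin Z = 1 := by
    rw [← map_add, ← map_add, h, toLpLin_one]
    rfl
  rw [hξ.eq_eigenvalues hX, hη.eq_eigenvalues hY, hζ.eq_eigenvalues hZ]
  simpa only [(hX.add hY).eigenvalues_of_add_eq_one hn hZ hXYZ]
    using hX.sum_eigenvalues_add_le hn hY s k hs

end Matrix

section OneBased

variable {n : ℕ} {β : Type*}

@[simp]
lemma oneBased_val_add_one [Zero β] (v : Fin n → β) (i : Fin n) : oneBased v (i + 1) = v i := by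
  simp [oneBased]

lemma sum_range_oneBased_add_one [AddCommMonoid β] (v : Fin n → β) (k : Fin n) :
    ∑ j ∈ Finset.range (k + 1), oneBased v (j + 1) = ∑ j ∈ Finset.Iic k, v j := by
  rw [Nat.range_succ_eq_Iic, ← Fin.map_valEmbedding_Iic, Finset.sum_map]
  simp

end OneBased

theorem stmt10_general {n : ℕ} (T R A : Matrix (Fin n) (Fin n) ℂ)
    (hsum : T + R + A = 1)
    (τ ρ α : Fin n → ℝ)
    (hτ : IsEigDesc T τ) (hρ : IsEigDesc R ρ) (hα : IsEigDesc A α) :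
    ∀ r : ℕ, 1 ≤ r → r ≤ n - 1 →
      ∀ idx : Fin r → ℕ, StrictMono idx → (∀ a, 1 ≤ idx a ∧ idx a ≤ n) →
        ((∑ a, oneBased τ (n + 1 - idx a)) ≥
          (r : ℝ) - (∑ a, oneBased ρ (idx a))
            - (∑ j ∈ Finset.range r, oneBased α (j + 1))) ∧
        ((∑ a, oneBased τ (n + 1 - idx a)) ≥
          (r : ℝ) - (∑ j ∈ Finset.range r, oneBased ρ (j + 1))
            - (∑ a, oneBased α (idx a))) := by
  intro r hr hrn idx hidx hbound
  let ι : Fin r → Fin n := fun a => ⟨idx a - 1, by have := hbound a; omega⟩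
  have hidx_eq : ∀ a, idx a = ι a + 1 := fun a => by
    have := hbound a
    show idx a = idx a - 1 + 1
    omega
  have hι : Function.Injective ι := fun a b hab => hidx.injective (by rw [hidx_eq, hidx_eq, hab])
  let s := Finset.univ.image ι
  let k : Fin n := ⟨r - 1, by omega⟩
  have hk : (k : ℕ) + 1 = r := Nat.sub_add_cancel hr
  have hs : s.card = k + 1 := by
    rw [Finset.card_image_of_injective _ hι, Finset.card_univ, Fintype.card_fin, hk]
  have hsum_idx : ∀ v : Fin n → ℝ, ∑ a, oneBased v (idx a) = ∑ i ∈ s, v i := fun v => by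
    simp [s, Finset.sum_image fun a _ b _ h => hι h, hidx_eq]
  have hsum_rev : ∑ a, oneBased τ (n + 1 - idx a) = ∑ i ∈ s, τ i.rev := by
    rw [← hsum_idx fun i => τ i.rev]
    refine Finset.sum_congr rfl fun a _ => ?_
    have hrev : n + 1 - idx a = (ι a).rev + 1 := by rw [hidx_eq, Fin.val_rev]; omega
    rw [hrev, hidx_eq, oneBased_val_add_one, oneBased_val_add_one]
  have h₁ := hρ.sum_one_sub_rev_le hα hτ (by rw [← hsum]; abel) s k hs
  have h₂ := hα.sum_one_sub_rev_le hρ hτ (by rw [← hsum]; abel) s k hs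
  rw [Finset.sum_sub_distrib, Finset.sum_const, hs, nsmul_one] at h₁ h₂
  rw [hsum_rev, hsum_idx, hsum_idx, ← hk, sum_range_oneBased_add_one, sum_range_oneBased_add_one]
  constructor <;> push_cast at h₁ h₂ ⊢ <;> linarith

/-- Lidskii–Wielandt-type inequalities. For `1 ≤ r ≤ n-1` and
`1 ≤ i_1 < … < i_r ≤ n` (given as a strictly monotone `idx : Fin r → ℕ`):
`Σ_{k=1}^{r} τ_{n+1-i_k} ≥ r - Σ_{k=1}^{r} ρ_{i_k} - Σ_{j=1}^{r} α_j` and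
`Σ_{k=1}^{r} τ_{n+1-i_k} ≥ r - Σ_{j=1}^{r} ρ_j - Σ_{k=1}^{r} α_{i_k}`,
where `τ, ρ, α` are the nonincreasingly ordered eigenvalues of PSD Hermitian
`T, R, A` with `T + R + A = I`. -/
theorem stmt10 {n : ℕ} (T R A : Matrix (Fin n) (Fin n) ℂ)
    (hT : T.PosSemidef) (hR : R.PosSemidef) (hA : A.PosSemidef)
    (hsum : T + R + A = 1)
    (τ ρ α : Fin n → ℝ)
    (hτ : IsEigDesc T τ) (hρ : IsEigDesc R ρ) (hα : IsEigDesc A α) :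
    ∀ r : ℕ, 1 ≤ r → r ≤ n - 1 →
      ∀ idx : Fin r → ℕ, StrictMono idx → (∀ a, 1 ≤ idx a ∧ idx a ≤ n) →
        ((∑ a, oneBased τ (n + 1 - idx a)) ≥
          (r : ℝ) - (∑ a, oneBased ρ (idx a))
            - (∑ j ∈ Finset.range r, oneBased α (j + 1))) ∧
        ((∑ a, oneBased τ (n + 1 - idx a)) ≥
          (r : ℝ) - (∑ j ∈ Finset.range r, oneBased ρ (j + 1))
            - (∑ a, oneBased α (idx a))) :=
  stmt10_general T R A hsum τ ρ α hτ hρ hα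
end

section
/- (Characterization for n = 2.) Let α̃ ∈ D_2 and let ρ̃ ∈ D_2 satisfy ρ̃_1 ≤ 1 − α̃_2 and ρ̃_2 ≤ 1 − α̃_1. Then a vector τ ∈ D_2 arises as the nonincreasingly ordered eigenvalues of a 2×2 complex positive semidefinite Hermitian matrix T for which there exist 2×2 complex positive semidefinite Hermitian matrices R, A with T + R + A = I and eigenvalues ρ̃, α̃ respectively, if and only if: τ_2 ≥ 1 − ρ̃_1 − α̃_1, τ_1 ≥ 1 − ρ̃_1 − α̃_2, τ_1 ≥ 1 − ρ̃_2 − α̃_1, and τ_1 + τ_2 = 2 − ρ̃_1 − ρ̃_2 − α̃_1 − α̃_2. -/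
/-!
Let `T + R + A = 1`. In the Loewner order `R ≤ ρ₁` and `A ≤ α₁`, so `T ≥ 1 - ρ₁ - α₁`:
every eigenvalue of each of the three matrices is at least one minus the top eigenvalues of
the other two, and the traces add up to `2`. This gives the necessity of the conditions.

Conversely, take `T = diag(τ₁, τ₂)` and let `R` be `diag(ρ₂, ρ₁)` rotated by an angle `θ`,
with `t = sin² θ`. Then `A = 1 - T - R` is a real symmetric matrix whose trace is `α₁ + α₂`
by the trace condition, and whose determinant is continuous (in fact affine) in `t`; the
three inequalities place `α₁ α₂` between its values at `t = 0` and `t = 1`, so some `t`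
makes the spectrum of `A` exactly `{α₁, α₂}`.
-/

open Matrix BigOperators
open scoped ComplexOrder

open scoped MatrixOrder

namespace IsEigDesc

variable {n : ℕ} {M : Matrix (Fin n) (Fin n) ℂ} {v : Fin n → ℝ}

lemma isHermitian_s12 (h : IsEigDesc M v) : M.IsHermitian :=
  h.2.1

lemma spectrum_eq (h : IsEigDesc M v) : spectrum ℝ M = Set.range v := by
  obtain ⟨-, hM, σ, hσ⟩ := h
  rw [hM.spectrum_real_eq_range_eigenvalues, funext hσ]
  exact (σ.surjective.range_comp _).symm

lemma trace_eq (h : IsEigDesc M v) : M.trace = ((∑ i, v i : ℝ) : ℂ) := by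
  obtain ⟨-, hM, σ, hσ⟩ := h
  rw [hM.trace_eq_sum_eigenvalues, Complex.ofReal_sum, funext hσ]
  exact (Equiv.sum_comp σ fun i => (hM.eigenvalues i : ℂ)).symm

lemma posSemidef (h : IsEigDesc M v) (hv : ∀ i, 0 ≤ v i) : M.PosSemidef := by
  obtain ⟨-, hM, σ, hσ⟩ := h
  refine hM.posSemidef_iff_eigenvalues_nonneg.2 fun j => ?_
  simpa [hσ] using hv (σ.symm j)

lemma le_algebraMap [NeZero n] (h : IsEigDesc M v) : M ≤ algebraMap ℝ _ (v 0) :=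
  le_algebraMap_of_spectrum_le
    (by rw [h.spectrum_eq]; rintro _ ⟨i, rfl⟩; exact h.1 (Fin.zero_le i))
    h.isHermitian_s12.isSelfAdjoint

lemma le_of_algebraMap_le (h : IsEigDesc M v) {r : ℝ} (hr : algebraMap ℝ _ r ≤ M) (i : Fin n) :
    r ≤ v i :=
  (algebraMap_le_iff_le_spectrum h.isHermitian_s12.isSelfAdjoint).1 hr (v i)
    (h.spectrum_eq ▸ ⟨i, rfl⟩)

lemma one_sub_sub_le [NeZero n] {T R A : Matrix (Fin n) (Fin n) ℂ} {τ ρ α : Fin n → ℝ}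
    (hT : IsEigDesc T τ) (hR : IsEigDesc R ρ) (hA : IsEigDesc A α) (hsum : T + R + A = 1)
    (i : Fin n) : 1 - ρ 0 - α 0 ≤ τ i :=
  hT.le_of_algebraMap_le (calc
    algebraMap ℝ _ (1 - ρ 0 - α 0) = 1 - algebraMap ℝ _ (ρ 0) - algebraMap ℝ _ (α 0) := by
      rw [map_sub, map_sub, map_one]
    _ ≤ 1 - R - A := by gcongr <;> [exact hR.le_algebraMap; exact hA.le_algebraMap]
    _ = T := by rw [← hsum]; abel) i

end IsEigDesc

lemma exists_perm_fin_two_of_add_eq_of_mul_eq {a b : Fin 2 → ℝ} (hs : a 0 + a 1 = b 0 + b 1)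
    (hp : a 0 * a 1 = b 0 * b 1) : ∃ σ : Equiv.Perm (Fin 2), ∀ i, b i = a (σ i) := by
  have : (a 0 - b 0) * (a 0 - b 1) = 0 := by linear_combination a 0 * hs - hp
  rcases mul_eq_zero.1 this with h | h
  · exact ⟨1, fun i => by fin_cases i <;> simp <;> linarith⟩
  · exact ⟨Equiv.swap 0 1, fun i => by fin_cases i <;> simp <;> linarith⟩

lemma isEigDesc_fin_two {a b d : ℝ} {v : Fin 2 → ℝ} (hv : Antitone v) (htr : a + d = v 0 + v 1)
    (hdet : a * d - b ^ 2 = v 0 * v 1) :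
    IsEigDesc !![(a : ℂ), (b : ℂ); (b : ℂ), (d : ℂ)] v := by
  have hM : (!![(a : ℂ), (b : ℂ); (b : ℂ), (d : ℂ)]).IsHermitian := by
    ext i j; fin_cases i <;> fin_cases j <;> simp
  refine ⟨hv, hM, exists_perm_fin_two_of_add_eq_of_mul_eq ?_ ?_⟩
  · have h := hM.trace_eq_sum_eigenvalues
    rw [trace_fin_two_of, Fin.sum_univ_two] at h
    rw [← htr]
    simpa using congrArg Complex.re h.symm
  · have h := hM.det_eq_prod_eigenvalues
    rw [det_fin_two_of, Fin.prod_univ_two] at h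
    rw [← hdet, sq]
    simpa using congrArg Complex.re h.symm

/-- The left-hand side is `det (1 - T - R)` for the matrices `T`, `R` of
`exists_isEigDesc_of_conditions`. -/
lemma exists_mem_Icc_det_eq {τ ρ α : Fin 2 → ℝ} (hα : α 1 ≤ α 0)
    (h₁ : 1 - ρ 0 - α 0 ≤ τ 1) (h₂ : 1 - ρ 0 - α 1 ≤ τ 0) (h₃ : 1 - ρ 1 - α 0 ≤ τ 0)
    (htr : τ 0 + τ 1 = 2 - ρ 0 - ρ 1 - α 0 - α 1) :
    ∃ t ∈ Set.Icc (0 : ℝ) 1,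
      (1 - τ 0 - ρ 1 - (ρ 0 - ρ 1) * t) * (1 - τ 1 - ρ 0 + (ρ 0 - ρ 1) * t) -
        (ρ 0 - ρ 1) ^ 2 * (t * (1 - t)) = α 0 * α 1 := by
  set f : ℝ → ℝ := fun t =>
    (1 - τ 0 - ρ 1 - (ρ 0 - ρ 1) * t) * (1 - τ 1 - ρ 0 + (ρ 0 - ρ 1) * t) -
      (ρ 0 - ρ 1) ^ 2 * (t * (1 - t))
  have hf : ContinuousOn f (Set.uIcc 0 1) := by fun_prop
  have hf₀ : f 0 - α 0 * α 1 = (τ 0 - (1 - ρ 1 - α 0)) * (τ 1 - (1 - ρ 0 - α 0)) := by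
    simp only [f]
    linear_combination (-α 0) * htr
  have hf₁ : α 0 * α 1 - f 1 = (τ 0 - (1 - ρ 0 - α 0)) * (τ 0 - (1 - ρ 0 - α 1)) := by
    simp only [f]
    linear_combination (1 - τ 0 - ρ 0) * htr
  have hτ₀ : 1 - ρ 0 - α 0 ≤ τ 0 := by linarith
  have hmem : α 0 * α 1 ∈ Set.uIcc (f 0) (f 1) := by
    refine Set.mem_uIcc.2 (Or.inr ⟨?_, ?_⟩) <;> rw [← sub_nonneg]
    · rw [hf₁]; exact mul_nonneg (sub_nonneg.2 hτ₀) (sub_nonneg.2 h₂)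
    · rw [hf₀]; exact mul_nonneg (sub_nonneg.2 h₃) (sub_nonneg.2 h₁)
  obtain ⟨t, ht, hft⟩ := intermediate_value_uIcc hf hmem
  exact ⟨t, by rwa [Set.uIcc_of_le zero_le_one] at ht, hft⟩

lemma conditions_of_isEigDesc {T R A : Matrix (Fin 2) (Fin 2) ℂ} {τ ρ α : Fin 2 → ℝ}
    (hsum : T + R + A = 1) (hT : IsEigDesc T τ) (hR : IsEigDesc R ρ) (hA : IsEigDesc A α) :
    τ 1 ≥ 1 - ρ 0 - α 0 ∧ τ 0 ≥ 1 - ρ 0 - α 1 ∧ τ 0 ≥ 1 - ρ 1 - α 0 ∧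
      τ 0 + τ 1 = 2 - ρ 0 - ρ 1 - α 0 - α 1 := by
  have hτ := hT.one_sub_sub_le hR hA hsum 1
  have hα := hA.one_sub_sub_le hR hT (by rw [← hsum]; abel) 1
  have hρ := hR.one_sub_sub_le hA hT (by rw [← hsum]; abel) 1
  have htr : ((∑ i, τ i + ∑ i, ρ i + ∑ i, α i : ℝ) : ℂ) = ((2 : ℝ) : ℂ) := by
    rw [Complex.ofReal_add, Complex.ofReal_add, ← hT.trace_eq, ← hR.trace_eq, ← hA.trace_eq,
      ← trace_add, ← trace_add, hsum, trace_one]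
    simp
  simp only [Fin.sum_univ_two, Complex.ofReal_inj] at htr
  refine ⟨hτ, ?_, ?_, ?_⟩ <;> linarith

lemma exists_isEigDesc_of_conditions {τ ρ α : Fin 2 → ℝ}
    (hτ : MemD τ) (hρ : MemD ρ) (hα : MemD α)
    (h₁ : τ 1 ≥ 1 - ρ 0 - α 0) (h₂ : τ 0 ≥ 1 - ρ 0 - α 1) (h₃ : τ 0 ≥ 1 - ρ 1 - α 0)
    (htr : τ 0 + τ 1 = 2 - ρ 0 - ρ 1 - α 0 - α 1) :
    ∃ T R A : Matrix (Fin 2) (Fin 2) ℂ,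
      T.PosSemidef ∧ R.PosSemidef ∧ A.PosSemidef ∧ T + R + A = 1 ∧
        IsEigDesc T τ ∧ IsEigDesc R ρ ∧ IsEigDesc A α := by
  obtain ⟨t, ⟨ht₀, ht₁⟩, hdet⟩ := exists_mem_Icc_det_eq (hα.1 zero_le_one) h₁ h₂ h₃ htr
  set δ := ρ 0 - ρ 1
  set b := δ * √(t * (1 - t))
  have hb : b ^ 2 = δ ^ 2 * (t * (1 - t)) := by
    rw [mul_pow, Real.sq_sqrt (mul_nonneg ht₀ (sub_nonneg.2 ht₁))]
  have hT := isEigDesc_fin_two (a := τ 0) (b := 0) (d := τ 1) hτ.1 rfl (by ring)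
  have hR := isEigDesc_fin_two (a := ρ 1 + δ * t) (b := b) (d := ρ 0 - δ * t) hρ.1 (by ring)
    (by linear_combination -hb)
  have hA := isEigDesc_fin_two (a := 1 - τ 0 - ρ 1 - δ * t) (b := -b) (d := 1 - τ 1 - ρ 0 + δ * t)
    hα.1 (by linarith) (by linear_combination hdet - hb)
  refine ⟨_, _, _, hT.posSemidef fun i => (hτ.2 i).1, hR.posSemidef fun i => (hρ.2 i).1,
    hA.posSemidef fun i => (hα.2 i).1, ?_, hT, hR, hA⟩
  ext i j
  fin_cases i <;> fin_cases j <;> simp <;> ring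

/-- Indices are 0-based: `τ_1 = τ 0`, `τ_2 = τ 1`. -/
theorem stmt12_general (αt ρt : Fin 2 → ℝ) (hα : MemD αt) (hρ : MemD ρt)
    (τ : Fin 2 → ℝ) (hτ : MemD τ) :
    (∃ T R A : Matrix (Fin 2) (Fin 2) ℂ,
        T.PosSemidef ∧ R.PosSemidef ∧ A.PosSemidef ∧ T + R + A = 1 ∧
        IsEigDesc T τ ∧ IsEigDesc R ρt ∧ IsEigDesc A αt) ↔
    (τ 1 ≥ 1 - ρt 0 - αt 0 ∧
     τ 0 ≥ 1 - ρt 0 - αt 1 ∧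
     τ 0 ≥ 1 - ρt 1 - αt 0 ∧
     τ 0 + τ 1 = 2 - ρt 0 - ρt 1 - αt 0 - αt 1) := by
  constructor
  · rintro ⟨T, R, A, -, -, -, hsum, hT, hR, hA⟩
    exact conditions_of_isEigDesc hsum hT hR hA
  · rintro ⟨h₁, h₂, h₃, htr⟩
    exact exists_isEigDesc_of_conditions hτ hρ hα h₁ h₂ h₃ htr

/-- characterization for `n = 2`, 0-based indices: `τ_1 = τ 0`, `τ_2 = τ 1`. -/
theorem stmt12 (αt ρt : Fin 2 → ℝ) (hα : MemD αt) (hρ : MemD ρt)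
    (hρ1 : ρt 0 ≤ 1 - αt 1) (hρ2 : ρt 1 ≤ 1 - αt 0)
    (τ : Fin 2 → ℝ) (hτ : MemD τ) :
    (∃ T R A : Matrix (Fin 2) (Fin 2) ℂ,
        T.PosSemidef ∧ R.PosSemidef ∧ A.PosSemidef ∧ T + R + A = 1 ∧
        IsEigDesc T τ ∧ IsEigDesc R ρt ∧ IsEigDesc A αt) ↔
    (τ 1 ≥ 1 - ρt 0 - αt 0 ∧
     τ 0 ≥ 1 - ρt 0 - αt 1 ∧
     τ 0 ≥ 1 - ρt 1 - αt 0 ∧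
     τ 0 + τ 1 = 2 - ρt 0 - ρt 1 - αt 0 - αt 1) :=
  stmt12_general αt ρt hα hρ τ hτ
end
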